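/- arXiv:1111.3094 — 9 statements merged into one kernel-verified Lean document; each statement's English description precedes it below -/
import Mathlib

section
/- Let ω ∈ S_n, 1 ≤ i < j ≤ n with (i,j) ∉ Inv(ω) (i.e. ω(i) < ω(j)), and let x ∈ [c_i(ω)], y ∈ [c_j(ω)]. Then m_{i,x}(ω) > m_{j,y}(ω) in the product order on ℕ^n if and only if y ≤ x − c_{i,j}(ω). -/
open Finset

/-- `c_i(ω)`: the number of `j > i` with `ω i > ω j` (the Lehmer code entries). -/
def lehmer {n : ℕ} (ω : Equiv.Perm (Fin n)) (i : Fin n) : ℕ :=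
  (univ.filter fun j => i < j ∧ ω j < ω i).card

/-- `c_{i,j}(ω)`: the number of `k` with `i < k < j` and `ω i > ω k`. -/
def cij {n : ℕ} (ω : Equiv.Perm (Fin n)) (i j : Fin n) : ℕ :=
  (univ.filter fun k => i < k ∧ k < j ∧ ω k < ω i).card

/-- `m_{i,x}(ω) ∈ ℕ^n`, defined coordinatewise. -/
def mvec {n : ℕ} (ω : Equiv.Perm (Fin n)) (i : Fin n) (x : ℕ) : Fin n → ℕ :=
  fun j => if j < i then 0 else if j = i then x
    else if ω j < ω i then 0 else x - cij ω i j

/-!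
Comparing the two vectors at coordinate `j` gives exactly `y ≤ x - c_{i,j}`. Conversely, at a
coordinate `k > j` with `ω j < ω k`, every `m` with `i < m < k` and `ω m < ω i` lies either before
`j` or after `j`, and in the latter case `ω m < ω i < ω j`; hence `c_{i,k} ≤ c_{i,j} + c_{j,k}`,
which makes `y - c_{j,k} ≤ x - c_{i,k}`. The coordinate `i` makes the inequality strict.
-/

section

variable {n : ℕ} (ω : Equiv.Perm (Fin n)) {i j k : Fin n} {x y : ℕ}

lemma cij_le_cij_add_cij (hjk : j < k) (hω : ω i < ω j) :
    cij ω i k ≤ cij ω i j + cij ω j k := by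
  unfold cij
  refine (card_le_card fun m hm => ?_).trans (card_union_le _ _)
  simp only [mem_filter, mem_union, mem_univ, true_and] at hm ⊢
  obtain ⟨him, hmk, hωm⟩ := hm
  rcases lt_trichotomy m j with hmj | rfl | hjm
  · exact Or.inl ⟨him, hmj, hωm⟩
  · exact absurd hω hωm.not_gt
  · exact Or.inr ⟨hjm, hmk, hωm.trans hω⟩

lemma mvec_apply_of_lt (x : ℕ) (h : k < i) : mvec ω i x k = 0 := by
  simp [mvec, h]

lemma mvec_apply_self (x : ℕ) : mvec ω i x i = x := by
  simp [mvec]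

lemma mvec_apply_of_gt_of_apply_lt (x : ℕ) (h : i < k) (hω : ω k < ω i) :
    mvec ω i x k = 0 := by
  simp [mvec, h.not_gt, h.ne', hω]

lemma mvec_apply_of_gt_of_apply_gt (x : ℕ) (h : i < k) (hω : ω i < ω k) :
    mvec ω i x k = x - cij ω i k := by
  simp [mvec, h.not_gt, h.ne', hω.not_gt]

lemma mvec_le_mvec_iff (hij : i < j) (hω : ω i < ω j) :
    mvec ω j y ≤ mvec ω i x ↔ y ≤ x - cij ω i j := by
  constructor
  · intro h
    simpa [mvec_apply_self, mvec_apply_of_gt_of_apply_gt ω x hij hω] using h j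
  · intro h k
    rcases lt_trichotomy k j with hkj | rfl | hjk
    · simp [mvec_apply_of_lt ω y hkj]
    · rwa [mvec_apply_self, mvec_apply_of_gt_of_apply_gt ω x hij hω]
    · rcases lt_or_gt_of_ne (ω.injective.ne hjk.ne') with hωk | hωk
      · simp [mvec_apply_of_gt_of_apply_lt ω y hjk hωk]
      · rw [mvec_apply_of_gt_of_apply_gt ω y hjk hωk,
          mvec_apply_of_gt_of_apply_gt ω x (hij.trans hjk) (hω.trans hωk)]
        calc y - cij ω j k ≤ x - cij ω i j - cij ω j k := Nat.sub_le_sub_right h _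
          _ = x - (cij ω i j + cij ω j k) := Nat.sub_sub _ _ _
          _ ≤ x - cij ω i k := Nat.sub_le_sub_left (cij_le_cij_add_cij ω hjk hω) x

end

theorem stmt4_general (n : ℕ) (ω : Equiv.Perm (Fin n)) (i j : Fin n) (x y : ℕ)
    (hij : i < j) (hω : ω i < ω j)
    (hx1 : 1 ≤ x) :
    mvec ω j y < mvec ω i x ↔ y ≤ x - cij ω i j := by
  rw [Pi.lt_def, mvec_le_mvec_iff ω hij hω, and_iff_left_iff_imp]
  intro _
  exact ⟨i, by rwa [mvec_apply_of_lt ω y hij, mvec_apply_self]⟩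

theorem stmt4 (n : ℕ) (ω : Equiv.Perm (Fin n)) (i j : Fin n) (x y : ℕ)
    (hij : i < j) (hω : ω i < ω j)
    (hx1 : 1 ≤ x) (hx2 : x ≤ lehmer ω i) (hy1 : 1 ≤ y) (hy2 : y ≤ lehmer ω j) :
    mvec ω j y < mvec ω i x ↔ y ≤ x - cij ω i j :=
  stmt4_general n ω i j x y hij hω hx1
end

section
/- Let ω ∈ S_n and 1 ≤ i < j ≤ n with (i,j) ∈ Inv(ω) (i.e. ω(i) > ω(j)). Then for every x ∈ [c_i(ω)] and y ∈ [c_j(ω)], the elements m_{i,x}(ω) and m_{j,y}(ω) are incomparable in the product order on ℕ^n. -/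
open Finset

theorem stmt5 (n : ℕ) (ω : Equiv.Perm (Fin n)) (i j : Fin n) (x y : ℕ)
    (hij : i < j) (hω : ω j < ω i)
    (hx1 : 1 ≤ x) (hx2 : x ≤ lehmer ω i) (hy1 : 1 ≤ y) (hy2 : y ≤ lehmer ω j) :
    ¬ mvec ω i x ≤ mvec ω j y ∧ ¬ mvec ω j y ≤ mvec ω i x := by
  constructor
  · intro h
    have := h i
    simp [mvec, hij, lt_irrefl, (ne_of_gt hij).symm] at this
    omega
  · intro h
    have := h j
    simp [mvec, not_lt.2 hij.le, (ne_of_gt hij), hω] at this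
    omega
end

section
/- If ω ∈ S_n is 231-avoiding (there are no indices i < j < l with ω(l) < ω(i) < ω(j)), then any two elements m_{i,x}(ω) and m_{j,y}(ω) of M_ω with i ≠ j are incomparable; hence M_ω is a disjoint union of the chains C_i(ω) = {m_{i,x}(ω) : x ∈ [c_i(ω)]}. -/
/-!
For a 231-avoiding `ω` and `x ≤ c_i(ω)`, the vector `m_{i,x}(ω)` is just `x • e_i`: if `i < j` and
`ω i < ω j`, every `k > i` with `ω k < ω i` must lie before `j` (otherwise `i, j, k` is a 231
pattern), so `c_{i,j}(ω) = c_i(ω) ≥ x` and the coordinate `x - c_{i,j}(ω)` vanishes. Multiples of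
distinct unit vectors with positive coefficients are incomparable.
-/

open Finset

def Avoids231 {n : ℕ} (ω : Equiv.Perm (Fin n)) : Prop :=
  ∀ i j l : Fin n, i < j → j < l → ¬ (ω l < ω i ∧ ω i < ω j)

theorem Pi.single_not_le_single {ι α : Type*} [DecidableEq ι] [Preorder α] [Zero α]
    {i j : ι} (hij : i ≠ j) {x : α} (hx : ¬ x ≤ 0) (y : α) :
    ¬ (Pi.single i x : ι → α) ≤ Pi.single j y := by
  intro h
  exact hx (by simpa [hij] using h i)

section
variable {n : ℕ} {ω : Equiv.Perm (Fin n)} {i j : Fin n}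

theorem lehmer_le_cij (hω : Avoids231 ω) (hij : i < j) (hωij : ω i < ω j) :
    lehmer ω i ≤ cij ω i j := by
  refine card_le_card fun k hk => ?_
  simp only [mem_filter, mem_univ, true_and] at hk ⊢
  obtain ⟨hik, hωk⟩ := hk
  refine ⟨hik, lt_of_not_ge fun hjk => ?_, hωk⟩
  rcases hjk.lt_or_eq with hjk | rfl
  · exact hω i j k hij hjk ⟨hωk, hωij⟩
  · exact hωij.not_gt hωk

theorem mvec_eq_single (hω : Avoids231 ω) {x : ℕ} (hx : x ≤ lehmer ω i) :
    mvec ω i x = Pi.single i x := by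
  funext j
  rcases lt_trichotomy j i with hji | rfl | hij
  · simp [mvec, hji, hji.ne]
  · simp [mvec]
  · have hωij : ω i ≠ ω j := ω.injective.ne hij.ne
    simp only [mvec, hij.not_gt, hij.ne', if_false, Pi.single_apply]
    split_ifs with hωji
    · rfl
    · have := lehmer_le_cij hω hij (lt_of_le_of_ne (not_lt.mp hωji) hωij)
      omega

end

theorem stmt6 (n : ℕ) (ω : Equiv.Perm (Fin n))
    (havoid : ∀ i j l : Fin n, i < j → j < l → ¬ (ω l < ω i ∧ ω i < ω j)) :
    ∀ i j : Fin n, ∀ x y : ℕ, i ≠ j →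
      1 ≤ x → x ≤ lehmer ω i → 1 ≤ y → y ≤ lehmer ω j →
      ¬ mvec ω i x ≤ mvec ω j y ∧ ¬ mvec ω j y ≤ mvec ω i x := by
  intro i j x y hij hx hxc hy hyc
  rw [mvec_eq_single havoid hxc, mvec_eq_single havoid hyc]
  exact ⟨Pi.single_not_le_single hij (by omega) y,
    Pi.single_not_le_single hij.symm (by omega) x⟩
end

section
/- Let ω ∈ S_n and 1 ≤ i < j ≤ n. If m_{i,a}(ω) > m_{j,b}(ω) with a, b ≥ 2, then m_{i,a−1}(ω) > m_{j,b−1}(ω). -/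
open Finset

theorem stmt7 (n : ℕ) (ω : Equiv.Perm (Fin n)) (i j : Fin n) (a b : ℕ)
    (hij : i < j) (ha : a ≤ lehmer ω i) (hb : b ≤ lehmer ω j)
    (ha2 : 2 ≤ a) (hb2 : 2 ≤ b)
    (h : mvec ω j b < mvec ω i a) :
    mvec ω j (b - 1) < mvec ω i (a - 1) := by
  have key : ∀ (p : Fin n) (x : ℕ) (k : Fin n), mvec ω p (x - 1) k = mvec ω p x k - 1 := by
    intro p x k
    simp only [mvec]
    split_ifs <;> simp [Nat.sub_right_comm]
  rw [Pi.lt_def] at h ⊢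
  obtain ⟨hle, -⟩ := h
  refine ⟨fun k => ?_, ⟨i, ?_⟩⟩
  · rw [key, key]
    exact Nat.sub_le_sub_right (hle k) 1
  · simp only [mvec, hij, if_pos, lt_irrefl, if_neg, if_true]
    simp [hij]
    omega
end

section
/- Let ω ∈ S_n and 1 ≤ i < j ≤ n. If m_{i,p}(ω) > m_{j,q}(ω) for some p ∈ [c_i(ω)] and q ∈ [c_j(ω)], then c_j(ω) ≥ c_i(ω) + q − p. -/
open Finset

theorem stmt9 (n : ℕ) (ω : Equiv.Perm (Fin n)) (i j : Fin n) (p q : ℕ)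
    (hij : i < j) (hp1 : 1 ≤ p) (hp2 : p ≤ lehmer ω i)
    (hq1 : 1 ≤ q) (hq2 : q ≤ lehmer ω j)
    (h : mvec ω j q < mvec ω i p) :
    lehmer ω i + q ≤ lehmer ω j + p := by
  have hj := h.1 j
  simp only [mvec, lt_irrefl, if_false, if_neg (not_lt.mpr hij.le),
    if_neg (ne_of_gt hij)] at hj
  rw [if_pos trivial] at hj
  by_cases hω : ω j < ω i
  · rw [if_pos hω] at hj; omega
  · rw [if_neg hω] at hj
    have hωle : ω i ≤ ω j := le_of_not_gt hω
    have key : lehmer ω i ≤ cij ω i j + lehmer ω j := by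
      unfold lehmer cij
      refine le_trans (card_le_card ?_) (card_union_le _ _)
      intro k hk
      simp only [mem_filter, mem_union, mem_univ, true_and] at *
      rcases lt_trichotomy k j with h1 | h1 | h1
      · exact Or.inl ⟨hk.1, h1, hk.2⟩
      · exact absurd (h1 ▸ hk.2) (not_lt.mpr hωle)
      · exact Or.inr ⟨h1, lt_of_lt_of_le hk.2 hωle⟩
    omega
end

section
/- Let ω ∈ S_n. If there exist 1 ≤ i < j ≤ n, b < a in [c_i(ω)] and c < d in [c_j(ω)] with a + c = b + d, such that m_{i,a}(ω) > m_{i,b}(ω) > m_{j,d}(ω) > m_{j,c}(ω) (a C₄-parallelogram pattern), then there exist indices i' < j', b' < a' in [c_{i'}(ω)] and c' < d' in [c_{j'}(ω)] with a' + c' = b' + d', such that m_{i',a'}(ω) > m_{j',d'}(ω), m_{i',b'}(ω) > m_{j',c'}(ω), and m_{i',b'}(ω) and m_{j',d'}(ω) are incomparable (a parallelogram pattern). -/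
open Finset

/-- The set `M_ω` of join-irreducibles, as a subset of `ℕ^n`. -/
def MSet {n : ℕ} (ω : Equiv.Perm (Fin n)) : Set (Fin n → ℕ) :=
  {v | ∃ i : Fin n, ∃ x : ℕ, 1 ≤ x ∧ x ≤ lehmer ω i ∧ v = mvec ω i x}

/-- `M_ω` has a parallelogram pattern. -/
def Parallelogram {n : ℕ} (ω : Equiv.Perm (Fin n)) : Prop :=
  ∃ i j : Fin n, ∃ a b c d : ℕ, i < j ∧
    b < a ∧ 1 ≤ b ∧ a ≤ lehmer ω i ∧
    c < d ∧ 1 ≤ c ∧ d ≤ lehmer ω j ∧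
    a + c = b + d ∧
    mvec ω j d < mvec ω i a ∧ mvec ω j c < mvec ω i b ∧
    ¬ mvec ω i b ≤ mvec ω j d ∧ ¬ mvec ω j d ≤ mvec ω i b

/-- `M_ω` has a `B₂`-pattern: four elements with a max, a min and two incomparable
middle elements. -/
def B2Pattern {n : ℕ} (ω : Equiv.Perm (Fin n)) : Prop :=
  ∃ w x y z : Fin n → ℕ, w ∈ MSet ω ∧ x ∈ MSet ω ∧ y ∈ MSet ω ∧ z ∈ MSet ω ∧
    x < w ∧ y < w ∧ z < x ∧ z < y ∧ ¬ x ≤ y ∧ ¬ y ≤ x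

lemma cij_triangle {n : ℕ} (ω : Equiv.Perm (Fin n)) {i j k : Fin n}
    (hij : i < j) (hωij : ω i < ω j) :
    cij ω i k ≤ cij ω i j + cij ω j k := by
  unfold cij
  calc (univ.filter fun l => i < l ∧ l < k ∧ ω l < ω i).card
      ≤ ((univ.filter fun l => i < l ∧ l < j ∧ ω l < ω i) ∪
         (univ.filter fun l => j < l ∧ l < k ∧ ω l < ω j)).card := by
        apply card_le_card
        intro l hl
        simp only [mem_filter, mem_union, mem_univ, true_and] at hl ⊢
        rcases lt_trichotomy l j with hlj | rfl | hjl
        · exact Or.inl ⟨hl.1, hlj, hl.2.2⟩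
        · exact absurd hl.2.2 (lt_asymm hωij)
        · exact Or.inr ⟨hjl, hl.2.1, hl.2.2.trans hωij⟩
    _ ≤ _ := card_union_le _ _

lemma mvec_lt {n : ℕ} (ω : Equiv.Perm (Fin n)) {i j : Fin n} {x y : ℕ}
    (hij : i < j) (hωij : ω i < ω j) (hx : 1 ≤ x) (hxy : cij ω i j + x ≤ y) :
    mvec ω j x < mvec ω i y := by
  rw [Pi.lt_def]
  constructor
  · intro k
    simp only [mvec]
    rcases lt_trichotomy k i with hki | rfl | hik
    · simp [hki, hki.trans hij]
    · simp [lt_irrefl, hij, hij.ne']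
    · rw [if_neg (lt_asymm hik), if_neg hik.ne']
      rcases lt_or_ge (ω k) (ω i) with hωk | hωk
      · rcases lt_trichotomy k j with hkj | rfl | hjk
        · simp [hkj, hωk]
        · exact absurd hωk (lt_asymm hωij)
        · rw [if_neg (lt_asymm hjk), if_neg hjk.ne', if_pos (hωk.trans hωij),
            if_pos hωk]
      · rw [if_neg (not_lt.2 hωk)]
        rcases lt_trichotomy k j with hkj | rfl | hjk
        · simp [hkj]
        · rw [if_neg (lt_irrefl _), if_pos rfl]; omega
        · rw [if_neg (lt_asymm hjk), if_neg hjk.ne']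
          rcases lt_or_ge (ω k) (ω j) with hωkj | hωkj
          · simp [hωkj]
          · rw [if_neg (not_lt.2 hωkj)]
            have := cij_triangle ω (k := k) hij hωij
            omega
  · refine ⟨i, ?_⟩
    simp [mvec, hij]
    omega

theorem stmt10 (n : ℕ) (ω : Equiv.Perm (Fin n))
    (h : ∃ i j : Fin n, ∃ a b c d : ℕ, i < j ∧
      b < a ∧ 1 ≤ b ∧ a ≤ lehmer ω i ∧
      c < d ∧ 1 ≤ c ∧ d ≤ lehmer ω j ∧
      a + c = b + d ∧
      mvec ω i b < mvec ω i a ∧ mvec ω j d < mvec ω i b ∧ mvec ω j c < mvec ω j d) :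
    Parallelogram ω := by
  obtain ⟨i, j, a, b, c, d, hij, hba, hb1, hale, hcd, hc1, hdle, hsum, h1, h2, h3⟩ := h
  have hd1 : 1 ≤ d := hc1.trans hcd.le
  have hcoord : d ≤ (if ω j < ω i then 0 else b - cij ω i j) := by
    have hle := h2.le j
    simpa [mvec, lt_irrefl, not_lt.2 hij.le, hij.ne'] using hle
  have hωij : ω i < ω j := by
    rcases lt_trichotomy (ω i) (ω j) with h' | h' | h'
    · exact h'
    · exact absurd (ω.injective h') hij.ne
    · rw [if_pos h'] at hcoord; omega
  have hb : cij ω i j + d ≤ b := by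
    rw [if_neg (not_lt.2 hωij.le)] at hcoord; omega
  refine ⟨i, j, cij ω i j + d - 1 + (d - c), cij ω i j + d - 1, c, d, hij,
    by omega, by omega, by omega, hcd, hc1, hdle, by omega, ?_, ?_, ?_, ?_⟩
  · exact mvec_lt ω hij hωij hd1 (by omega)
  · exact mvec_lt ω hij hωij hc1 (by omega)
  · intro hle
    have := hle i
    simp [mvec, hij] at this
    omega
  · intro hle
    have := hle j
    simp [mvec, not_lt.2 hij.le, hij.ne', not_lt.2 hωij.le] at this
    omega
end

section
/- For ω ∈ S_n, the poset M_ω contains a parallelogram pattern if and only if ω contains a 3412-pattern or a 3421-pattern, i.e., there exist i < j < k < l with ω(k), ω(l) < ω(i) < ω(j). -/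
open Finset

lemma cij_tri {n : ℕ} (ω : Equiv.Perm (Fin n)) {i j : Fin n} (hw : ω i < ω j) (t : Fin n) :
    cij ω i t ≤ cij ω i j + cij ω j t := by
  unfold cij
  refine le_trans (card_le_card ?_) (card_union_le _ _)
  intro k hk
  simp only [mem_filter, mem_union, mem_univ, true_and] at hk ⊢
  obtain ⟨h1, h2, h3⟩ := hk
  rcases lt_trichotomy k j with h | h | h
  · exact Or.inl ⟨h1, h, h3⟩
  · subst h; exact absurd (h3.trans hw) (lt_irrefl _)
  · exact Or.inr ⟨h, h2, h3.trans hw⟩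

lemma lehmer_split {n : ℕ} (ω : Equiv.Perm (Fin n)) {i j : Fin n} (hw : ω i < ω j) :
    lehmer ω i ≤ cij ω i j + (univ.filter fun t => j < t ∧ ω t < ω i).card := by
  unfold lehmer cij
  refine le_trans (card_le_card ?_) (card_union_le _ _)
  intro k hk
  simp only [mem_filter, mem_union, mem_univ, true_and] at hk ⊢
  obtain ⟨h1, h3⟩ := hk
  rcases lt_trichotomy k j with h | h | h
  · exact Or.inl ⟨h1, h, h3⟩
  · subst h; exact absurd (h3.trans hw) (lt_irrefl _)
  · exact Or.inr ⟨h, h3⟩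

lemma mvec_le {n : ℕ} (ω : Equiv.Perm (Fin n)) {i j : Fin n} (hij : i < j)
    (hw : ω i < ω j) {x y : ℕ} (hxy : x + cij ω i j ≤ y) :
    mvec ω j x ≤ mvec ω i y := by
  intro t
  show mvec ω j x t ≤ mvec ω i y t
  by_cases h1 : t < j
  · have hz : mvec ω j x t = 0 := by simp [mvec, h1]
    rw [hz]; exact Nat.zero_le _
  by_cases h2 : t = j
  · subst h2
    have hL : mvec ω t x t = x := by simp [mvec]
    have hR : mvec ω i y t = y - cij ω i t := by
      simp [mvec, not_lt.mpr hij.le, hij.ne', hw.not_gt]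
    rw [hL, hR]; omega
  have htj : j < t := lt_of_le_of_ne (not_lt.mp h1) (Ne.symm h2)
  by_cases h3 : ω t < ω j
  · have hz : mvec ω j x t = 0 := by simp [mvec, h1, h2, h3]
    rw [hz]; exact Nat.zero_le _
  · have hti : i < t := hij.trans htj
    have hwt : ω i < ω t := hw.trans_le (not_lt.mp h3)
    have hL : mvec ω j x t = x - cij ω j t := by simp [mvec, h1, h2, h3]
    have hR : mvec ω i y t = y - cij ω i t := by
      simp [mvec, not_lt.mpr hti.le, hti.ne', hwt.not_gt]
    have htri := cij_tri ω hw t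
    rw [hL, hR]; omega

theorem stmt12 (n : ℕ) (ω : Equiv.Perm (Fin n)) :
    Parallelogram ω ↔
      ∃ i j k l : Fin n, i < j ∧ j < k ∧ k < l ∧
        ω k < ω i ∧ ω i < ω j ∧ ω l < ω i := by
  constructor
  · rintro ⟨i, j, a, b, c, d, hij, hba, hb1, haI, hcd, hc1, hdJ, habcd, hlt1, hlt2, hnc1, hnc2⟩
    have hd2 : 2 ≤ d := by omega
    have hj : mvec ω j d j ≤ mvec ω i a j := hlt1.le j
    have hLj : mvec ω j d j = d := by simp [mvec]
    have hwij : ω i < ω j := by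
      by_contra hcon
      have hne : ω j ≠ ω i := fun h => hij.ne' (ω.injective h)
      have hwj : ω j < ω i := lt_of_le_of_ne (not_lt.mp hcon) hne
      have : mvec ω i a j = 0 := by simp [mvec, not_lt.mpr hij.le, hij.ne', hwj]
      rw [hLj, this] at hj; omega
    have hRj : mvec ω i a j = a - cij ω i j := by
      simp [mvec, not_lt.mpr hij.le, hij.ne', hwij.not_gt]
    rw [hLj, hRj] at hj
    have hsplit := lehmer_split ω hwij
    have h2 : 2 ≤ ((univ.filter fun t => j < t ∧ ω t < ω i)).card := by omega
    obtain ⟨k, hk, l, hl, hkl⟩ := Finset.one_lt_card.mp h2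
    simp only [mem_filter, mem_univ, true_and] at hk hl
    rcases hkl.lt_or_gt with h | h
    · exact ⟨i, j, k, l, hij, hk.1, h, hk.2, hwij, hl.2⟩
    · exact ⟨i, j, l, k, hij, hl.1, h, hl.2, hwij, hk.2⟩
  · rintro ⟨i, j, k, l, hij, hjk, hkl, hki, hwij, hli⟩
    have hkj : ω k < ω j := hki.trans hwij
    have hlj : ω l < ω j := hli.trans hwij
    set e := cij ω i j with he
    have hLj : 2 ≤ lehmer ω j := by
      have hsub : ({k, l} : Finset (Fin n)) ⊆ univ.filter fun t => j < t ∧ ω t < ω j := by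
        intro t ht
        simp only [mem_insert, mem_singleton] at ht
        simp only [mem_filter, mem_univ, true_and]
        rcases ht with rfl | rfl
        · exact ⟨hjk, hkj⟩
        · exact ⟨hjk.trans hkl, hlj⟩
      have := card_le_card hsub
      rwa [card_pair hkl.ne] at this
    have hLi : e + 2 ≤ lehmer ω i := by
      have hdisj : Disjoint (univ.filter fun t => i < t ∧ t < j ∧ ω t < ω i)
          ({k, l} : Finset (Fin n)) := by
        rw [Finset.disjoint_right]
        intro t ht hts
        simp only [mem_insert, mem_singleton] at ht
        simp only [mem_filter, mem_univ, true_and] at hts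
        rcases ht with rfl | rfl
        · exact absurd hts.2.1 (not_lt.mpr hjk.le)
        · exact absurd hts.2.1 (not_lt.mpr (hjk.trans hkl).le)
      have hsub : (univ.filter fun t => i < t ∧ t < j ∧ ω t < ω i) ∪ ({k, l} : Finset (Fin n))
          ⊆ univ.filter fun t => i < t ∧ ω t < ω i := by
        intro t ht
        simp only [mem_union, mem_filter, mem_insert, mem_singleton, mem_univ, true_and] at ht ⊢
        rcases ht with ⟨h1, _, h3⟩ | (rfl | rfl)
        · exact ⟨h1, h3⟩
        · exact ⟨hij.trans hjk, hki⟩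
        · exact ⟨hij.trans (hjk.trans hkl), hli⟩
      have hcard := card_le_card hsub
      rw [card_union_of_disjoint hdisj, card_pair hkl.ne] at hcard
      exact hcard
    refine ⟨i, j, e + 2, e + 1, 1, 2, hij, by omega, by omega, hLi, by omega, le_refl 1,
      hLj, by omega, ?_, ?_, ?_, ?_⟩
    · rw [Pi.lt_def]
      refine ⟨mvec_le ω hij hwij (by omega), i, ?_⟩
      have h1 : mvec ω j 2 i = 0 := by simp [mvec, hij]
      have h2 : mvec ω i (e + 2) i = e + 2 := by simp [mvec]
      rw [h1, h2]; omega
    · rw [Pi.lt_def]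
      refine ⟨mvec_le ω hij hwij (by omega), i, ?_⟩
      have h1 : mvec ω j 1 i = 0 := by simp [mvec, hij]
      have h2 : mvec ω i (e + 1) i = e + 1 := by simp [mvec]
      rw [h1, h2]; omega
    · intro h
      have hi : mvec ω i (e + 1) i ≤ mvec ω j 2 i := h i
      have h1 : mvec ω j 2 i = 0 := by simp [mvec, hij]
      have h2 : mvec ω i (e + 1) i = e + 1 := by simp [mvec]
      rw [h1, h2] at hi; omega
    · intro h
      have hj : mvec ω j 2 j ≤ mvec ω i (e + 1) j := h j
      have h1 : mvec ω j 2 j = 2 := by simp [mvec]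
      have h2 : mvec ω i (e + 1) j = (e + 1) - e := by
        simp [mvec, not_lt.mpr hij.le, hij.ne', hwij.not_gt, he]
      rw [h1, h2] at hj; omega
end

section
/- If ω ∈ S_n contains a 3412-pattern witnessed by indices i < j < k < l (so ω(k) < ω(l) < ω(i) < ω(j)), then c_i(ω) ≥ 2, c_j(ω) ≥ 2, and m_{i, c_i(ω)−1}(ω) > m_{j,1}(ω) in the componentwise order on ℕ^n. -/
open Finset

/-!
Set `x = c_i(ω) - 1`. Both `k` and `l` lie after `i` below `ω i`, so for every `t ≤ k` the window
`(i, t)` misses at least two of the inversions counted by `c_i`, i.e. `c_{i,t} + 2 ≤ c_i` and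
hence `x - c_{i,t} ≥ 1`. The vector `m_{j,1}` has entries in `{0, 1}`, and a coordinate `t > j`
can equal `1` only if `c_{j,t} = 0`, which forces `t ≤ k` because `k` is an inversion of `j`;
there `m_{i,x}` is at least `1`. Strictness comes from coordinate `i`, where `m_{j,1}` vanishes
and `m_{i,x}` equals `x ≥ 1`.
-/

section Perm

variable {n : ℕ} (ω : Equiv.Perm (Fin n))

theorem cij_self (a : Fin n) : cij ω a a = 0 := by
  simp only [cij, card_eq_zero, filter_eq_empty_iff]
  rintro s - ⟨has, hsa, -⟩
  exact (has.trans hsa).false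

theorem le_of_cij_eq_zero {a k t : Fin n} (hak : a < k) (hka : ω k < ω a)
    (h : cij ω a t = 0) : t ≤ k := by
  by_contra! hkt
  have hk : k ∈ univ.filter fun s => a < s ∧ s < t ∧ ω s < ω a := by simp [hak, hkt, hka]
  exact (card_pos.2 ⟨k, hk⟩).ne' h

theorem cij_add_two_le_lehmer {a k l t : Fin n} (hak : a < k) (hkl : k < l)
    (hka : ω k < ω a) (hla : ω l < ω a) (htk : t ≤ k) : cij ω a t + 2 ≤ lehmer ω a := by
  set S := univ.filter fun s => a < s ∧ s < t ∧ ω s < ω a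
  have hdisj : Disjoint S {k, l} := by
    refine disjoint_left.2 fun s hs hkl' => ?_
    have hst : s < k := (mem_filter.1 hs).2.2.1.trans_le htk
    rcases mem_insert.1 hkl' with rfl | hl
    · exact hst.false
    · exact (hst.trans (mem_singleton.1 hl ▸ hkl)).false
  have hsub : S ∪ {k, l} ⊆ univ.filter fun s => a < s ∧ ω s < ω a := by
    intro s hs
    simp only [S, mem_union, mem_insert, mem_singleton, mem_filter, mem_univ, true_and] at hs ⊢
    rcases hs with ⟨has, -, hsa⟩ | rfl | rfl
    exacts [⟨has, hsa⟩, ⟨hak, hka⟩, ⟨hak.trans hkl, hla⟩]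
  have hcard := card_le_card hsub
  rwa [card_union_of_disjoint hdisj, card_pair hkl.ne] at hcard

theorem mvec_of_lt {a t : Fin n} (x : ℕ) (hta : t < a) : mvec ω a x t = 0 := by
  simp [mvec, hta]

theorem mvec_self (a : Fin n) (x : ℕ) : mvec ω a x a = x := by
  simp [mvec]

theorem mvec_of_lt_of_lt {a t : Fin n} (x : ℕ) (hat : a < t) (hta : ω t < ω a) :
    mvec ω a x t = 0 := by
  simp [mvec, hat.not_gt, hat.ne', hta]

theorem mvec_of_lt_of_gt {a t : Fin n} (x : ℕ) (hat : a < t) (hta : ω a < ω t) :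
    mvec ω a x t = x - cij ω a t := by
  simp [mvec, hat.not_gt, hat.ne', hta.not_gt]

theorem mvec_one_le_mvec {i j : Fin n} {x : ℕ} (hij : i < j) (hω : ω i < ω j)
    (hx : ∀ t, j ≤ t → cij ω j t = 0 → cij ω i t < x) : mvec ω j 1 ≤ mvec ω i x := by
  intro t
  -- restate with the `ℕ` order instance, which `omega` recognizes, instead of the `Pi.le` one
  change mvec ω j 1 t ≤ mvec ω i x t
  rcases lt_trichotomy t j with htj | rfl | hjt
  · simp [mvec_of_lt ω 1 htj]
  · rw [mvec_self, mvec_of_lt_of_gt ω x hij hω]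
    have := hx t le_rfl (cij_self ω t)
    omega
  rcases lt_or_gt_of_ne (ω.injective.ne hjt.ne') with htω | htω
  · simp [mvec_of_lt_of_lt ω 1 hjt htω]
  rw [mvec_of_lt_of_gt ω 1 hjt htω, mvec_of_lt_of_gt ω x (hij.trans hjt) (hω.trans htω)]
  by_cases h0 : cij ω j t = 0
  · have := hx t hjt.le h0
    omega
  · omega

end Perm

theorem stmt14 (n : ℕ) (ω : Equiv.Perm (Fin n)) (i j k l : Fin n)
    (hij : i < j) (hjk : j < k) (hkl : k < l)
    (h1 : ω k < ω l) (h2 : ω l < ω i) (h3 : ω i < ω j) :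
    2 ≤ lehmer ω i ∧ 2 ≤ lehmer ω j ∧
      mvec ω j 1 < mvec ω i (lehmer ω i - 1) := by
  have hki : ω k < ω i := h1.trans h2
  have hkj : ω k < ω j := hki.trans h3
  have hi : ∀ t ≤ k, cij ω i t + 2 ≤ lehmer ω i := fun t htk =>
    cij_add_two_le_lehmer ω (hij.trans hjk) hkl hki h2 htk
  have hci : 2 ≤ lehmer ω i := by simpa [cij_self] using hi i (hij.trans hjk).le
  have hcj : 2 ≤ lehmer ω j := by
    simpa [cij_self] using cij_add_two_le_lehmer ω hjk hkl hkj (h2.trans h3) hjk.le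
  refine ⟨hci, hcj, Pi.lt_def.2 ⟨mvec_one_le_mvec ω hij h3 fun t _ h0 => ?_, i, ?_⟩⟩
  · have := hi t (le_of_cij_eq_zero ω hjk hkj h0)
    omega
  · rw [mvec_of_lt ω 1 hij, mvec_self]
    omega
end

section
/- Let ω ∈ S_n and suppose 1 ≤ i < j ≤ n, with a ∈ [c_i(ω)] and c ∈ [c_j(ω)] with c ≥ 2, and m_{i,a}(ω) ≥ m_{j,c}(ω) componentwise. Then there exist indices y₁, y₂ with j < y₁ < y₂ ≤ n such that ω(i) > ω(y₁) and ω(i) > ω(y₂); in particular ω contains a 3412- or 3421-pattern at positions i < j < y₁ < y₂. -/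
open Finset

theorem stmt15 (n : ℕ) (ω : Equiv.Perm (Fin n)) (i j : Fin n) (a c : ℕ)
    (hij : i < j) (ha1 : 1 ≤ a) (ha2 : a ≤ lehmer ω i)
    (hc1 : 2 ≤ c) (hc2 : c ≤ lehmer ω j)
    (h : mvec ω j c ≤ mvec ω i a) :
    ∃ y₁ y₂ : Fin n, j < y₁ ∧ y₁ < y₂ ∧
      ω y₁ < ω i ∧ ω y₂ < ω i ∧ ω i < ω j := by
  have hji : ¬ j < i := not_lt.mpr hij.le
  have hjne : j ≠ i := ne_of_gt hij
  have hj := h j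
  simp only [mvec, lt_self_iff_false, if_false, eq_self_iff_true, if_true, if_neg hji,
    if_neg hjne] at hj
  have hωij : ω i < ω j := by
    rcases lt_trichotomy (ω j) (ω i) with hlt | heq | hgt
    · rw [if_pos hlt] at hj; omega
    · exact absurd (ω.injective heq) hjne
    · exact hgt
  have hnlt : ¬ ω j < ω i := not_lt.mpr hωij.le
  rw [if_neg hnlt] at hj
  -- hj : c ≤ a - cij ω i j
  set S := univ.filter (fun k => j < k ∧ ω k < ω i) with hS
  have hsub : (univ.filter fun k => i < k ∧ ω k < ω i) ⊆
      (univ.filter fun k => i < k ∧ k < j ∧ ω k < ω i) ∪ S := by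
    intro k hk
    simp only [mem_filter, mem_univ, true_and] at hk
    rcases lt_trichotomy k j with hkj | hkj | hkj
    · exact mem_union_left _ (by simp [hk.1, hkj, hk.2])
    · exact absurd hk.2 (by rw [hkj]; exact hnlt)
    · exact mem_union_right _ (by simp [hS, hkj, hk.2])
  have hcard : lehmer ω i ≤ cij ω i j + S.card := by
    calc lehmer ω i ≤ ((univ.filter fun k => i < k ∧ k < j ∧ ω k < ω i) ∪ S).card :=
          card_le_card hsub
      _ ≤ cij ω i j + S.card := card_union_le _ _
  have h2 : 2 ≤ S.card := by omega
  obtain ⟨x, hx, y, hy, hxy⟩ := Finset.one_lt_card.mp h2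
  simp only [hS, mem_filter, mem_univ, true_and] at hx hy
  rcases hxy.lt_or_gt with hlt | hlt
  · exact ⟨x, y, hx.1, hlt, hx.2, hy.2, hωij⟩
  · exact ⟨y, x, hy.1, hlt, hy.2, hx.2, hωij⟩
end
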